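/- Let C = ℝ × S¹ be the cylinder (S¹ the circle). Suppose φ : C → C is a local homeomorphism such that there is a compact set K ⊆ C with φ(x) = x for all x ∉ K. Then φ is a homeomorphism of C onto itself; in particular φ is bijective. -/

import Mathlib

/-!
Since `φ⁻¹' L ⊆ K ∪ L`, the map `φ` is proper, hence closed. Being also open, its image is
clopen, so `φ` is surjective. For an open and closed local homeomorphism, the set of points whose fibre has at most one point is clopen: it is open because
all of `φ⁻¹' y` lies in one open set on which `φ` is injective, and its complement is open because
two distinct preimages have disjoint neighbourhoods with overlapping images. Noncompactness gives
a point outside `K ∪ φ '' K`, whose fibre is a single point, so every fibre is.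
-/

open Set Function

variable {X Y : Type*} [TopologicalSpace X] [TopologicalSpace Y]

theorem isProperMap_of_eqOn_compl_isCompact [T2Space X] [CompactlyCoherentSpace X] {φ : X → X} (hφ : Continuous φ)
    {K : Set X} (hK : IsCompact K) (hsupp : ∀ x ∉ K, φ x = x) : IsProperMap φ := by
  refine isProperMap_iff_isCompact_preimage.mpr ⟨hφ, fun L hL => ?_⟩
  refine (hK.union hL).of_isClosed_subset (hL.isClosed.preimage hφ) fun x hx => ?_
  by_cases hxK : x ∈ K
  · exact Or.inl hxK
  · exact Or.inr (hsupp x hxK ▸ hx)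

theorem IsOpenMap.surjective_of_isClosedMap [Nonempty X] [PreconnectedSpace Y] {φ : X → Y}
    (hφo : IsOpenMap φ) (hφc : IsClosedMap φ) : Surjective φ :=
  range_eq_univ.mp <| IsClopen.eq_univ ⟨hφc.isClosed_range, hφo.isOpen_range⟩ (range_nonempty φ)

theorem IsOpenMap.isOpen_setOf_nontrivial_preimage [T2Space X] {φ : X → Y} (hφ : IsOpenMap φ) :
    IsOpen {y | (φ ⁻¹' {y}).Nontrivial} := by
  refine isOpen_iff_forall_mem_open.mpr ?_
  rintro y ⟨a, rfl, b, hb, hab⟩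
  obtain ⟨Ua, Ub, hUa, hUb, haU, hbU, hdisj⟩ := t2_separation hab
  refine ⟨φ '' Ua ∩ φ '' Ub, ?_, (hφ _ hUa).inter (hφ _ hUb), ⟨a, haU, rfl⟩, ⟨b, hbU, hb⟩⟩
  rintro _ ⟨⟨a', ha', rfl⟩, ⟨b', hb', hb'a'⟩⟩
  exact ⟨a', rfl, b', hb'a', fun h => disjoint_left.mp hdisj ha' (h ▸ hb')⟩

theorem IsLocalHomeomorph.isOpen_setOf_subsingleton_preimage {φ : X → Y}
    (hφ : IsLocalHomeomorph φ) (hφc : IsClosedMap φ) :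
    IsOpen {y | (φ ⁻¹' {y}).Subsingleton} := by
  refine isOpen_iff_forall_mem_open.mpr fun y hy => ?_
  obtain ⟨U, hUo, hUinj, hyU⟩ : ∃ U : Set X, IsOpen U ∧ InjOn φ U ∧ φ ⁻¹' {y} ⊆ U := by
    by_cases hyr : y ∈ range φ
    · obtain ⟨x, rfl⟩ := hyr
      obtain ⟨e, hxe, rfl⟩ := hφ x
      exact ⟨e.source, e.open_source, e.injOn, fun x' hx' => hy hx' rfl ▸ hxe⟩
    · exact ⟨∅, isOpen_empty, injOn_empty _, fun x hx => hyr ⟨x, hx⟩⟩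
  refine ⟨(φ '' Uᶜ)ᶜ, fun w hw a ha b hb => ?_, (hφc _ hUo.isClosed_compl).isOpen_compl, ?_⟩
  · have hmem : ∀ x, φ x = w → x ∈ U := fun x hx => by_contra fun h => hw ⟨x, h, hx⟩
    exact hUinj (hmem a ha) (hmem b hb) (ha.trans hb.symm)
  · rintro ⟨x, hxU, hx⟩
    exact hxU (hyU hx)

theorem IsLocalHomeomorph.injective_of_isClosedMap [T2Space X] [PreconnectedSpace Y] {φ : X → Y}
    (hφ : IsLocalHomeomorph φ) (hφc : IsClosedMap φ) {y₀ : Y}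
    (hy₀ : (φ ⁻¹' {y₀}).Subsingleton) : Injective φ := by
  have hclosed : IsClosed {y | (φ ⁻¹' {y}).Subsingleton} := by
    simpa only [← isOpen_compl_iff, compl_ofPred, not_subsingleton_iff]
      using hφ.isOpenMap.isOpen_setOf_nontrivial_preimage
  have huniv := IsClopen.eq_univ ⟨hclosed, hφ.isOpen_setOf_subsingleton_preimage hφc⟩ ⟨y₀, hy₀⟩
  intro a b hab
  exact (eq_univ_iff_forall.mp huniv (φ b)) hab rfl

theorem exists_preimage_eq_singleton_of_eqOn_compl_isCompact [NoncompactSpace X] {φ : X → X}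
    (hφ : Continuous φ) {K : Set X} (hK : IsCompact K) (hsupp : ∀ x ∉ K, φ x = x) :
    ∃ y, φ ⁻¹' {y} = {y} := by
  obtain ⟨y, hy⟩ := nonempty_compl.mpr (hK.union (hK.image hφ)).ne_univ
  simp only [mem_compl_iff, mem_union, mem_image, not_or, not_exists, not_and] at hy
  refine ⟨y, Subset.antisymm (fun x hx => ?_) (by simp [hsupp y hy.1])⟩
  by_cases hxK : x ∈ K
  · exact absurd hx (hy.2 x hxK)
  · exact (hsupp x hxK).symm.trans hx

theorem IsLocalHomeomorph.bijective_of_eqOn_compl_isCompact [T2Space X]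
    [CompactlyCoherentSpace X] [ConnectedSpace X] [NoncompactSpace X] {φ : X → X} (hφ : IsLocalHomeomorph φ) {K : Set X} (hK : IsCompact K)
    (hsupp : ∀ x ∉ K, φ x = x) : Bijective φ := by
  have hφc := (isProperMap_of_eqOn_compl_isCompact hφ.continuous hK hsupp).isClosedMap
  obtain ⟨y₀, hy₀⟩ := exists_preimage_eq_singleton_of_eqOn_compl_isCompact hφ.continuous hK hsupp
  exact ⟨hφ.injective_of_isClosedMap hφc (hy₀ ▸ subsingleton_singleton),
    hφ.isOpenMap.surjective_of_isClosedMap hφc⟩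

theorem stmt5 (φ : ℝ × AddCircle (1 : ℝ) → ℝ × AddCircle (1 : ℝ))
    (hloc : IsLocalHomeomorph φ)
    (K : Set (ℝ × AddCircle (1 : ℝ))) (hK : IsCompact K)
    (hsupp : ∀ x ∉ K, φ x = x) :
    Function.Bijective φ ∧
      ∃ e : (ℝ × AddCircle (1 : ℝ)) ≃ₜ (ℝ × AddCircle (1 : ℝ)), ⇑e = φ := by
  have hbij := hloc.bijective_of_eqOn_compl_isCompact hK hsupp
  exact ⟨hbij, hloc.toHomeomorphOfBijective hbij, rfl⟩
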